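/- arXiv:1510.07180 — 4 statements merged into one kernel-verified Lean document; each statement's English description precedes it below -/
import Mathlib

section
/- Let c = min{n ∈ ℕ : a_n > 0}. Then for every y ∈ ℝ, lim_{θ→0⁺} C(θΦ((y-μ)/σ))/C(θ) = (Φ((y-μ)/σ))^c, i.e., as θ → 0⁺ the NPS CDF converges pointwise to the CDF of the maximum of c i.i.d. N(μ,σ²) random variables. -/
set_option maxHeartbeats 1000000

open MeasureTheory Filter Topology

noncomputable def stdPdf (x : ℝ) : ℝ := (Real.sqrt (2 * Real.pi))⁻¹ * Real.exp (-(x ^ 2) / 2)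

noncomputable def stdCdf (x : ℝ) : ℝ := ∫ t in Set.Iic x, stdPdf t

lemma stdPdf_pos (x : ℝ) : 0 < stdPdf x := by
  unfold stdPdf
  have : 0 < Real.sqrt (2 * Real.pi) := Real.sqrt_pos.2 (by positivity)
  positivity

lemma integrable_stdPdf : Integrable stdPdf := by
  have h : Integrable (fun x : ℝ => Real.exp (-(1/2 : ℝ) * x ^ 2)) :=
    integrable_exp_neg_mul_sq (by norm_num)
  have := h.const_mul ((Real.sqrt (2 * Real.pi))⁻¹)
  refine this.congr (Filter.Eventually.of_forall fun x => ?_)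
  unfold stdPdf; ring_nf

lemma integral_stdPdf : ∫ x, stdPdf x = 1 := by
  have h : ∫ x : ℝ, Real.exp (-(1/2 : ℝ) * x ^ 2) = Real.sqrt (Real.pi / (1/2)) :=
    integral_gaussian (1/2)
  have heq : ∀ x : ℝ, stdPdf x = (Real.sqrt (2 * Real.pi))⁻¹ * Real.exp (-(1/2 : ℝ) * x ^ 2) := by
    intro x; unfold stdPdf; ring_nf
  rw [funext heq, integral_const_mul, h]
  have : Real.pi / (1/2) = 2 * Real.pi := by ring
  rw [this]
  have hpos : 0 < Real.sqrt (2 * Real.pi) := Real.sqrt_pos.2 (by positivity)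
  field_simp

lemma stdCdf_pos (x : ℝ) : 0 < stdCdf x := by
  unfold stdCdf
  rw [setIntegral_pos_iff_support_of_nonneg_ae
    (Filter.Eventually.of_forall fun t => (stdPdf_pos t).le) integrable_stdPdf.integrableOn]
  have : Function.support stdPdf = Set.univ := by
    ext t; simp [Function.mem_support, (stdPdf_pos t).ne']
  rw [this, Set.univ_inter]
  simp [Real.volume_Iic]

lemma stdCdf_le_one (x : ℝ) : stdCdf x ≤ 1 := by
  unfold stdCdf
  rw [← integral_stdPdf]
  exact setIntegral_le_integral integrable_stdPdf
    (Filter.Eventually.of_forall fun t => (stdPdf_pos t).le)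

/-- with `c = min{n : aₙ > 0}`, as θ → 0⁺ the NPS CDF converges pointwise to
`(Φ((y-μ)/σ))^c`. -/
theorem nps_cdf_tendsto_of_theta_to_zero (μ σ : ℝ) (hσ : 0 < σ) (s : ℝ) (hs : 0 < s)
    (a : ℕ → ℝ) (ha : ∀ n, 0 ≤ a n) (ha0 : a 0 = 0)
    (c : ℕ) (hc : 0 < a c) (hmin : ∀ n < c, a n = 0)
    (C : ℝ → ℝ) (hC : ∀ t, C t = ∑' n : ℕ, a n * t ^ n)
    (hsum : ∀ θ ∈ Set.Ioo (0 : ℝ) s, Summable fun n : ℕ => a n * θ ^ n)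
    (y : ℝ) :
    Tendsto (fun θ => C (θ * stdCdf ((y - μ) / σ)) / C θ)
      (𝓝[>] (0 : ℝ)) (𝓝 ((stdCdf ((y - μ) / σ)) ^ c)) := by
  set p := stdCdf ((y - μ) / σ) with hpdef
  have hp0 : 0 < p := stdCdf_pos _
  have hp1 : p ≤ 1 := stdCdf_le_one _
  set g : ℝ → ℝ := fun θ => ∑' n : ℕ, a (n + c) * θ ^ n with hgdef
  -- summability of shifted series
  have hsum' : ∀ θ : ℝ, 0 ≤ θ → θ < s → Summable (fun n : ℕ => a (n + c) * θ ^ n) := by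
    intro θ hθ0 hθs
    obtain ⟨θ1, hθθ1, hθ1s⟩ := exists_between hθs
    have hθ10 : 0 < θ1 := lt_of_le_of_lt hθ0 hθθ1
    have h1 : Summable (fun n : ℕ => a (n + c) * θ1 ^ (n + c)) :=
      (summable_nat_add_iff c).2 (hsum θ1 ⟨hθ10, hθ1s⟩)
    have h2 : Summable (fun n : ℕ => a (n + c) * θ1 ^ n) := by
      have hne : (θ1 : ℝ) ^ c ≠ 0 := pow_ne_zero _ hθ10.ne'
      refine (h1.mul_right ((θ1 ^ c)⁻¹)).congr fun n => ?_
      rw [pow_add]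
      field_simp
    refine Summable.of_nonneg_of_le (fun n => mul_nonneg (ha _) (pow_nonneg hθ0 n)) (fun n => ?_) h2
    exact mul_le_mul_of_nonneg_left (pow_le_pow_left₀ hθ0 hθθ1.le n) (ha _)
  -- C θ = θ^c * g θ
  have hCeq : ∀ θ : ℝ, 0 < θ → θ < s → C θ = θ ^ c * g θ := by
    intro θ hθ0 hθs
    have hS := hsum θ ⟨hθ0, hθs⟩
    rw [hC, ← Summable.sum_add_tsum_nat_add c hS]
    have hz : ∑ i ∈ Finset.range c, a i * θ ^ i = 0 :=
      Finset.sum_eq_zero fun i hi => by rw [hmin i (Finset.mem_range.1 hi), zero_mul]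
    rw [hz, zero_add, hgdef, ← tsum_mul_left]
    exact tsum_congr fun n => by rw [pow_add]; ring
  -- the tail h
  set M : ℝ := ∑' n : ℕ, a (n + 1 + c) * (s / 2) ^ n with hMdef
  have hMsum : Summable (fun n : ℕ => a (n + 1 + c) * (s / 2) ^ n) := by
    have hsne : (s/2 : ℝ) ≠ 0 := by positivity
    refine (((summable_nat_add_iff 1).2 (hsum' (s/2) (by positivity)
      (by linarith))).mul_right ((s/2)⁻¹)).congr fun n => ?_
    rw [pow_succ]
    field_simp
  have hgsplit : ∀ θ : ℝ, 0 ≤ θ → θ < s →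
      g θ = a c + ∑' n : ℕ, a (n + 1 + c) * θ ^ (n + 1) := by
    intro θ hθ0 hθs
    have hS := hsum' θ hθ0 hθs
    rw [hgdef]
    simp only
    rw [Summable.tsum_eq_zero_add hS]
    norm_num
  have htail_sum : ∀ θ : ℝ, 0 ≤ θ → θ ≤ s/2 →
      Summable (fun n : ℕ => a (n + 1 + c) * θ ^ (n + 1)) := by
    intro θ hθ0 hθs
    refine Summable.of_nonneg_of_le (fun n => mul_nonneg (ha _) (pow_nonneg hθ0 _)) (fun n => ?_)
      ((hMsum.mul_left θ))
    calc a (n + 1 + c) * θ ^ (n + 1) = θ * (a (n + 1 + c) * θ ^ n) := by ring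
    _ ≤ θ * (a (n + 1 + c) * (s/2) ^ n) := by
        refine mul_le_mul_of_nonneg_left (mul_le_mul_of_nonneg_left
          (pow_le_pow_left₀ hθ0 hθs n) (ha _)) hθ0
  have htail_le : ∀ θ : ℝ, 0 ≤ θ → θ ≤ s/2 →
      (∑' n : ℕ, a (n + 1 + c) * θ ^ (n + 1)) ≤ θ * M := by
    intro θ hθ0 hθs
    have h1 : (∑' n : ℕ, a (n + 1 + c) * θ ^ (n + 1))
        ≤ ∑' n : ℕ, θ * (a (n + 1 + c) * (s/2) ^ n) := by
      refine Summable.tsum_le_tsum (fun n => ?_) (htail_sum θ hθ0 hθs) (hMsum.mul_left θ)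
      calc a (n + 1 + c) * θ ^ (n + 1) = θ * (a (n + 1 + c) * θ ^ n) := by ring
      _ ≤ θ * (a (n + 1 + c) * (s/2) ^ n) :=
          mul_le_mul_of_nonneg_left (mul_le_mul_of_nonneg_left
            (pow_le_pow_left₀ hθ0 hθs n) (ha _)) hθ0
    rw [tsum_mul_left] at h1
    exact h1
  -- g tends to a c along 𝓝[>] 0
  have hmem : Set.Ioo (0:ℝ) (min (s/2) 1) ∈ 𝓝[>] (0:ℝ) :=
    Ioo_mem_nhdsGT_of_mem ⟨le_refl _, lt_min (by linarith) one_pos⟩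
  have hgtend : Tendsto g (𝓝[>] (0:ℝ)) (𝓝 (a c)) := by
    have htail0 : Tendsto (fun θ : ℝ => ∑' n : ℕ, a (n + 1 + c) * θ ^ (n + 1))
        (𝓝[>] (0:ℝ)) (𝓝 0) := by
      refine squeeze_zero' (g := fun θ : ℝ => θ * M) ?_ ?_ ?_
      · filter_upwards [hmem] with θ hθ
        exact tsum_nonneg fun n => mul_nonneg (ha _) (pow_nonneg hθ.1.le _)
      · filter_upwards [hmem] with θ hθ
        exact htail_le θ hθ.1.le (le_of_lt (lt_of_lt_of_le hθ.2 (min_le_left _ _)))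
      · have : Tendsto (fun θ : ℝ => θ * M) (𝓝 (0:ℝ)) (𝓝 (0 * M)) :=
          (continuous_id.mul continuous_const).tendsto 0
        rw [zero_mul] at this
        exact this.mono_left nhdsWithin_le_nhds
    have : Tendsto (fun θ : ℝ => a c + ∑' n : ℕ, a (n + 1 + c) * θ ^ (n + 1))
        (𝓝[>] (0:ℝ)) (𝓝 (a c + 0)) := tendsto_const_nhds.add htail0
    rw [add_zero] at this
    refine this.congr' ?_
    filter_upwards [hmem] with θ hθ
    exact (hgsplit θ hθ.1.le (by have := hθ.2; have := min_le_left (s/2) 1; linarith)).symm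
  -- composition with θ ↦ θ * p
  have hmap : Tendsto (fun θ : ℝ => θ * p) (𝓝[>] (0:ℝ)) (𝓝[>] (0:ℝ)) := by
    refine tendsto_nhdsWithin_of_tendsto_nhds_of_eventually_within _ ?_ ?_
    · have : Tendsto (fun θ : ℝ => θ * p) (𝓝 (0:ℝ)) (𝓝 (0 * p)) :=
        (continuous_id.mul continuous_const).tendsto 0
      rw [zero_mul] at this
      exact this.mono_left nhdsWithin_le_nhds
    · filter_upwards [self_mem_nhdsWithin] with θ hθ
      exact mul_pos hθ hp0
  have hgtend' : Tendsto (fun θ : ℝ => g (θ * p)) (𝓝[>] (0:ℝ)) (𝓝 (a c)) :=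
    hgtend.comp hmap
  -- conclude
  have hlim : Tendsto (fun θ : ℝ => p ^ c * (g (θ * p) / g θ)) (𝓝[>] (0:ℝ))
      (𝓝 (p ^ c * (a c / a c))) :=
    tendsto_const_nhds.mul (hgtend'.div hgtend hc.ne')
  rw [div_self hc.ne', mul_one] at hlim
  refine hlim.congr' ?_
  filter_upwards [hmem] with θ hθ
  have hθ0 : 0 < θ := hθ.1
  have hθs : θ < s := by
    have h1 := hθ.2; have h2 := min_le_left (s/2) 1; linarith
  have hθp0 : 0 < θ * p := mul_pos hθ0 hp0
  have hθps : θ * p < s := by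
    have : θ * p ≤ θ * 1 := mul_le_mul_of_nonneg_left hp1 hθ0.le
    linarith
  rw [hCeq θ hθ0 hθs, hCeq (θ * p) hθp0 hθps, mul_pow]
  rw [show θ ^ c * p ^ c * g (θ * p) = θ ^ c * (p ^ c * g (θ * p)) by ring]
  rw [mul_div_mul_left _ _ (pow_ne_zero c hθ0.ne'), mul_div_assoc]
end

section
/- The NPS density can be written as a countable mixture of densities of maxima: (θ/σ)φ((y-μ)/σ)C'(θΦ((y-μ)/σ))/C(θ) = Σ_{n=1}^∞ g_n(y)·(a_n θ^n / C(θ)), where g_n(y) = (n/σ)φ((y-μ)/σ)(Φ((y-μ)/σ))^{n-1} is the density of the maximum of n i.i.d. N(μ,σ²) random variables. -/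
open MeasureTheory Filter Topology

/-- the NPS density is a countable mixture of the densities
`gₙ(y) = (n/σ)φ(z)Φ(z)^{n-1}` of maxima of n i.i.d. normals, with weights `aₙθⁿ/C(θ)`. -/
theorem nps_pdf_mixture (μ σ θ : ℝ) (hσ : 0 < σ) (hθ : 0 < θ)
    (a : ℕ → ℝ) (ha : ∀ n, 0 ≤ a n)
    (C C' : ℝ → ℝ)
    (hC' : ∀ t, C' t = ∑' n : ℕ, (n : ℝ) * a n * t ^ (n - 1))
    (hCθ : 0 < C θ) (y : ℝ) :
    θ / σ * stdPdf ((y - μ) / σ) * C' (θ * stdCdf ((y - μ) / σ)) / C θ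
      = ∑' n : ℕ, ((n : ℝ) / σ * stdPdf ((y - μ) / σ) * (stdCdf ((y - μ) / σ)) ^ (n - 1))
          * (a n * θ ^ n / C θ) := by
  rw [hC', ← tsum_mul_left, ← tsum_div_const]
  refine tsum_congr fun n => ?_
  cases n with
  | zero => simp
  | succ m => simp only [Nat.succ_sub_one, mul_pow]; ring
end

section
/- In the compound model where N has the power series distribution P(N=n) = a_n θ^n / C(θ) and Y = max(X_1,...,X_N) of i.i.d. N(μ,σ²) variables, the conditional pmf of N given Y = y is P(N=z | Y=y) = a_z θ^{z-1} z Φ^{z-1}((y-μ)/σ) / C'(θΦ((y-μ)/σ)), and consequently E(N | Y=y) = 1 + θΦ((y-μ)/σ)·C''(θΦ((y-μ)/σ))/C'(θΦ((y-μ)/σ)). -/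
open MeasureTheory Filter Topology

lemma natCast_mul_pow_eq_mul_natCast_mul_pow_pred (z : ℕ) (x : ℝ) :
    (z : ℝ) * x ^ z = x * ((z : ℝ) * x ^ (z - 1)) := by
  cases z with
  | zero => simp
  | succ n => rw [Nat.add_sub_cancel, pow_succ]; ring

lemma natCast_mul_sub_one_mul_pow_pred (n : ℕ) (x : ℝ) :
    (n : ℝ) * ((n : ℝ) - 1) * x ^ (n - 1) = x * ((n : ℝ) * ((n : ℝ) - 1) * x ^ (n - 2)) := by
  rcases n with _ | _ | m
  · simp
  · simp
  · rw [show m + 2 - 1 = m + 1 by omega, show m + 2 - 2 = m by omega, pow_succ]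
    ring

lemma Summable.natCast_mul_of_sq_mul {b : ℕ → ℝ}
    (h : Summable fun n : ℕ => (n : ℝ) ^ 2 * b n) : Summable fun n : ℕ => (n : ℝ) * b n := by
  refine h.norm.of_norm_bounded fun n => ?_
  rw [norm_mul, norm_mul, norm_pow, Real.norm_natCast]
  gcongr
  exact_mod_cast Nat.le_self_pow two_ne_zero n

/-- Termwise form of `(t C'(t))' = C'(t) + t C''(t)`. -/
lemma tsum_sq_mul_pow_pred (a : ℕ → ℝ) (t : ℝ)
    (h : Summable fun n : ℕ => (n : ℝ) ^ 2 * a n * t ^ (n - 1)) :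
    ∑' n : ℕ, (n : ℝ) ^ 2 * a n * t ^ (n - 1)
      = ∑' n : ℕ, (n : ℝ) * a n * t ^ (n - 1)
        + t * ∑' n : ℕ, (n : ℝ) * ((n : ℝ) - 1) * a n * t ^ (n - 2) := by
  have h₁ : Summable fun n : ℕ => (n : ℝ) * a n * t ^ (n - 1) :=
    (Summable.natCast_mul_of_sq_mul (b := fun n => a n * t ^ (n - 1))
      (h.congr fun n => by ring)).congr fun n => by ring
  have h₂ : Summable fun n : ℕ => (n : ℝ) * ((n : ℝ) - 1) * a n * t ^ (n - 1) :=
    (h.sub h₁).congr fun n => by ring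
  calc ∑' n : ℕ, (n : ℝ) ^ 2 * a n * t ^ (n - 1)
      = ∑' n : ℕ, ((n : ℝ) * a n * t ^ (n - 1)
          + (n : ℝ) * ((n : ℝ) - 1) * a n * t ^ (n - 1)) := tsum_congr fun n => by ring
    _ = ∑' n : ℕ, (n : ℝ) * a n * t ^ (n - 1)
          + ∑' n : ℕ, (n : ℝ) * ((n : ℝ) - 1) * a n * t ^ (n - 1) := h₁.tsum_add h₂
    _ = _ := by
      rw [← tsum_mul_left]
      congr 1
      refine tsum_congr fun n => ?_
      rw [mul_right_comm, natCast_mul_sub_one_mul_pow_pred]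
      ring

theorem nps_conditional_pmf_and_mean_general (μ σ θ : ℝ) (hσ : 0 < σ) (hθ : 0 < θ)
    (a : ℕ → ℝ)
    (C C' C'' : ℝ → ℝ)
    (hC' : ∀ u, C' u = ∑' n : ℕ, (n : ℝ) * a n * u ^ (n - 1))
    (hC'' : ∀ u, C'' u = ∑' n : ℕ, (n : ℝ) * ((n : ℝ) - 1) * a n * u ^ (n - 2))
    (hCθ : 0 < C θ)
    (y t : ℝ) (ht : t = θ * stdCdf ((y - μ) / σ))
    (hC'pos : 0 < C' t)
    (hsum2 : Summable fun n : ℕ => (n : ℝ) ^ 2 * a n * t ^ (n - 1)) :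
    (∀ z : ℕ,
      (a z * θ ^ z / (σ * C θ) * z * stdPdf ((y - μ) / σ) * (stdCdf ((y - μ) / σ)) ^ (z - 1))
        / (θ / σ * stdPdf ((y - μ) / σ) * C' t / C θ)
      = a z * θ ^ (z - 1) * z * (stdCdf ((y - μ) / σ)) ^ (z - 1) / C' t) ∧
    ∑' z : ℕ, (z : ℝ) *
        (a z * θ ^ (z - 1) * z * (stdCdf ((y - μ) / σ)) ^ (z - 1) / C' t)
      = 1 + t * C'' t / C' t := by
  have hφ := (stdPdf_pos ((y - μ) / σ)).ne'
  refine ⟨fun z => ?_, ?_⟩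
  · have hθz := natCast_mul_pow_eq_mul_natCast_mul_pow_pred z θ
    field_simp
    linear_combination a z * stdCdf ((y - μ) / σ) ^ (z - 1) * hθz
  · calc ∑' z : ℕ, (z : ℝ) * (a z * θ ^ (z - 1) * z * (stdCdf ((y - μ) / σ)) ^ (z - 1) / C' t)
        = (∑' z : ℕ, (z : ℝ) ^ 2 * a z * t ^ (z - 1)) / C' t := by
          rw [← tsum_div_const]
          exact tsum_congr fun z => by rw [ht, mul_pow]; ring
      _ = (C' t + t * C'' t) / C' t := by rw [tsum_sq_mul_pow_pred a t hsum2, hC', hC'']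
      _ = 1 + t * C'' t / C' t := by field_simp

/-- in the compound NPS model, the conditional pmf of N given Y = y is
`P(N=z|Y=y) = a_z θ^{z-1} z Φ^{z-1}(z)/C'(θΦ(z))`, and consequently
`E(N|Y=y) = 1 + θΦ C''(θΦ)/C'(θΦ)`. -/
theorem nps_conditional_pmf_and_mean (μ σ θ : ℝ) (hσ : 0 < σ) (hθ : 0 < θ)
    (a : ℕ → ℝ) (ha : ∀ n, 0 ≤ a n)
    (C C' C'' : ℝ → ℝ)
    (hC' : ∀ u, C' u = ∑' n : ℕ, (n : ℝ) * a n * u ^ (n - 1))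
    (hC'' : ∀ u, C'' u = ∑' n : ℕ, (n : ℝ) * ((n : ℝ) - 1) * a n * u ^ (n - 2))
    (hCθ : 0 < C θ)
    (y t : ℝ) (ht : t = θ * stdCdf ((y - μ) / σ))
    (hC'pos : 0 < C' t)
    (hsum2 : Summable fun n : ℕ => (n : ℝ) ^ 2 * a n * t ^ (n - 1)) :
    (∀ z : ℕ,
      (a z * θ ^ z / (σ * C θ) * z * stdPdf ((y - μ) / σ) * (stdCdf ((y - μ) / σ)) ^ (z - 1))
        / (θ / σ * stdPdf ((y - μ) / σ) * C' t / C θ)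
      = a z * θ ^ (z - 1) * z * (stdCdf ((y - μ) / σ)) ^ (z - 1) / C' t) ∧
    ∑' z : ℕ, (z : ℝ) *
        (a z * θ ^ (z - 1) * z * (stdCdf ((y - μ) / σ)) ^ (z - 1) / C' t)
      = 1 + t * C'' t / C' t :=
  nps_conditional_pmf_and_mean_general μ σ θ hσ hθ a C C' C'' hC' hC'' hCθ y t ht hC'pos hsum2
end

section
/- In the compound NPS model, the conditional variance of N given Y = y equals [θ*²C'''(θ*) + C'(θ*) + 3θ*C''(θ*)]/C'(θ*) − [C'(θ*) + θ*C''(θ*)]²/C'(θ*)², where θ* = θΦ((y-μ)/σ). -/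
open MeasureTheory Filter Topology

private lemma summable_aux (a : ℕ → ℝ) (t : ℝ)
    (h : Summable fun n : ℕ => (n : ℝ) ^ 3 * a n * t ^ (n - 1))
    (c : ℕ → ℝ) (hc : ∀ n, |c n| ≤ (n : ℝ) ^ 3) :
    Summable fun n : ℕ => c n * a n * t ^ (n - 1) := by
  refine (Summable.of_nonneg_of_le (fun n => abs_nonneg _) (fun n => ?_) h.abs).of_abs
  have h1 : |c n * a n * t ^ (n - 1)| = |c n| * |a n * t ^ (n - 1)| := by
    rw [mul_assoc, abs_mul]
  have h2 : |(n : ℝ) ^ 3 * a n * t ^ (n - 1)| = (n : ℝ) ^ 3 * |a n * t ^ (n - 1)| := by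
    rw [mul_assoc, abs_mul, abs_of_nonneg (by positivity : (0:ℝ) ≤ (n:ℝ)^3)]
  rw [h1, h2]
  exact mul_le_mul_of_nonneg_right (hc n) (abs_nonneg _)

private lemma hb3 (n : ℕ) : |(n : ℝ) * ((n : ℝ) - 1) * ((n : ℝ) - 2)| ≤ (n : ℝ) ^ 3 := by
  match n with
  | 0 => norm_num
  | 1 => norm_num
  | 2 => norm_num
  | (n + 3) =>
    have h0 : (0:ℝ) ≤ (n:ℝ) := Nat.cast_nonneg n
    push_cast
    rw [abs_of_nonneg (by nlinarith [mul_nonneg h0 h0])]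
    nlinarith [mul_nonneg h0 h0, mul_nonneg (mul_nonneg h0 h0) h0]

private lemma hb2 (n : ℕ) : |(n : ℝ) * ((n : ℝ) - 1)| ≤ (n : ℝ) ^ 3 := by
  match n with
  | 0 => norm_num
  | 1 => norm_num
  | (n + 2) =>
    have h0 : (0:ℝ) ≤ (n:ℝ) := Nat.cast_nonneg n
    push_cast
    rw [abs_of_nonneg (by nlinarith [mul_nonneg h0 h0])]
    nlinarith [mul_nonneg h0 h0, mul_nonneg (mul_nonneg h0 h0) h0]

private lemma hb1 (n : ℕ) : |(n : ℝ)| ≤ (n : ℝ) ^ 3 := by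
  match n with
  | 0 => norm_num
  | (n + 1) =>
    have h0 : (0:ℝ) ≤ (n:ℝ) := Nat.cast_nonneg n
    push_cast
    rw [abs_of_nonneg (by positivity)]
    nlinarith [mul_nonneg h0 h0, mul_nonneg (mul_nonneg h0 h0) h0]

/-- in the compound NPS model, with θ* = θΦ((y-μ)/σ) and conditional pmf
`P(N=z|Y=y) = z a_z θ*^{z-1}/C'(θ*)`, the conditional variance of N given Y = y equals
`[θ*²C'''(θ*) + C'(θ*) + 3θ*C''(θ*)]/C'(θ*) − [C'(θ*) + θ*C''(θ*)]²/C'(θ*)²`. -/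
theorem nps_conditional_variance (μ σ θ : ℝ) (hσ : 0 < σ) (hθ : 0 < θ)
    (a : ℕ → ℝ) (ha : ∀ n, 0 ≤ a n)
    (C' C'' C''' : ℝ → ℝ)
    (hC' : ∀ u, C' u = ∑' n : ℕ, (n : ℝ) * a n * u ^ (n - 1))
    (hC'' : ∀ u, C'' u = ∑' n : ℕ, (n : ℝ) * ((n : ℝ) - 1) * a n * u ^ (n - 2))
    (hC''' : ∀ u, C''' u = ∑' n : ℕ,
      (n : ℝ) * ((n : ℝ) - 1) * ((n : ℝ) - 2) * a n * u ^ (n - 3))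
    (y t : ℝ) (ht : t = θ * stdCdf ((y - μ) / σ))
    (hC'pos : 0 < C' t)
    (hsum3 : Summable fun n : ℕ => (n : ℝ) ^ 3 * a n * t ^ (n - 1)) :
    (∑' z : ℕ, (z : ℝ) ^ 2 * ((z : ℝ) * a z * t ^ (z - 1) / C' t))
      - (∑' z : ℕ, (z : ℝ) * ((z : ℝ) * a z * t ^ (z - 1) / C' t)) ^ 2
    = (t ^ 2 * C''' t + C' t + 3 * t * C'' t) / C' t
        - (C' t + t * C'' t) ^ 2 / (C' t) ^ 2 := by
  have hC'ne : C' t ≠ 0 := ne_of_gt hC'pos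
  have hg3 : Summable (fun n : ℕ => ((n:ℝ) * ((n:ℝ)-1) * ((n:ℝ)-2)) * a n * t^(n-1)) :=
    summable_aux a t hsum3 _ hb3
  have hg2 : Summable (fun n : ℕ => ((n:ℝ) * ((n:ℝ)-1)) * a n * t^(n-1)) :=
    summable_aux a t hsum3 _ hb2
  have hg1 : Summable (fun n : ℕ => (n:ℝ) * a n * t^(n-1)) :=
    summable_aux a t hsum3 _ hb1
  -- t^2 * C''' t as a sum with exponent n-1
  have e3 : t^2 * C''' t = ∑' n : ℕ, ((n:ℝ) * ((n:ℝ)-1) * ((n:ℝ)-2)) * a n * t^(n-1) := by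
    rw [hC''', ← tsum_mul_left]
    refine tsum_congr fun n => ?_
    match n with
    | 0 => norm_num
    | 1 => norm_num
    | 2 => norm_num
    | (n + 3) =>
      have h1 : n + 3 - 3 = n := rfl
      have h2 : n + 3 - 1 = n + 2 := rfl
      rw [h1, h2]
      push_cast
      ring
  -- t * C'' t as a sum with exponent n-1
  have e2 : t * C'' t = ∑' n : ℕ, ((n:ℝ) * ((n:ℝ)-1)) * a n * t^(n-1) := by
    rw [hC'', ← tsum_mul_left]
    refine tsum_congr fun n => ?_
    match n with
    | 0 => norm_num
    | 1 => norm_num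
    | (n + 2) =>
      have h1 : n + 2 - 2 = n := rfl
      have h2 : n + 2 - 1 = n + 1 := rfl
      rw [h1, h2]
      push_cast
      ring
  have hA : (∑' n : ℕ, (n:ℝ)^3 * a n * t^(n-1))
      = t^2 * C''' t + 3 * t * C'' t + C' t := by
    have step : (∑' n : ℕ, (n:ℝ)^3 * a n * t^(n-1))
        = (∑' n : ℕ, ((n:ℝ) * ((n:ℝ)-1) * ((n:ℝ)-2)) * a n * t^(n-1))
          + ((∑' n : ℕ, 3 * (((n:ℝ) * ((n:ℝ)-1)) * a n * t^(n-1)))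
            + (∑' n : ℕ, (n:ℝ) * a n * t^(n-1))) := by
      rw [← Summable.tsum_add (hg2.mul_left 3) hg1, ← Summable.tsum_add hg3 ((hg2.mul_left 3).add hg1)]
      exact tsum_congr fun n => by ring
    rw [step, tsum_mul_left, ← e3, ← e2, ← hC' t]
    ring
  have hB : (∑' n : ℕ, (n:ℝ)^2 * a n * t^(n-1)) = C' t + t * C'' t := by
    have step : (∑' n : ℕ, (n:ℝ)^2 * a n * t^(n-1))
        = (∑' n : ℕ, ((n:ℝ) * ((n:ℝ)-1)) * a n * t^(n-1))
          + (∑' n : ℕ, (n:ℝ) * a n * t^(n-1)) := by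
      rw [← Summable.tsum_add hg2 hg1]
      exact tsum_congr fun n => by ring
    rw [step, ← e2, ← hC' t]
    ring
  have h1 : (∑' z : ℕ, (z : ℝ) ^ 2 * ((z : ℝ) * a z * t ^ (z - 1) / C' t))
      = (t^2 * C''' t + 3 * t * C'' t + C' t) / C' t := by
    rw [← hA, ← tsum_div_const]
    exact tsum_congr fun z => by ring
  have h2 : (∑' z : ℕ, (z : ℝ) * ((z : ℝ) * a z * t ^ (z - 1) / C' t))
      = (C' t + t * C'' t) / C' t := by
    rw [← hB, ← tsum_div_const]
    exact tsum_congr fun z => by ring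
  rw [h1, h2]
  field_simp
  ring
end
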